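/- arXiv:2112.14326 — 2 statements merged into one kernel-verified Lean document; each statement's English description precedes it below -/
import Mathlib

section
/- Under the DBO evolution equations with M_x-orthonormal Û and M_ξ-orthonormal Ŷ, the residual R = U̇ Σ Ŷᵀ + Û Σ̇ Ŷᵀ + Û Σ Ẏᵀ - F̂ satisfies R = -(I - Û Ûᵀ M_x) F̂ (I - M_ξ Ŷ Ŷᵀ), i.e., the residual equals minus the doubly projected component of F̂ orthogonal (in the weighted sense) to both subspaces. -/
open Matrix

/-- Under the DBO evolution equations with `M_x`-orthonormal `Û` and `M_ξ`-orthonormal `Ŷ`,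
the residual `R = U̇ Σ Ŷᵀ + Û Σ̇ Ŷᵀ + Û Σ Ẏᵀ - F̂` equals
`-(I - Û Ûᵀ M_x) F̂ (I - M_ξ Ŷ Ŷᵀ)`. -/
theorem stmt9 {n r s : ℕ}
    (Mx : Matrix (Fin n) (Fin n) ℝ) (hMx : Mx.PosDef)
    (Mxi : Matrix (Fin s) (Fin s) ℝ) (hMxi : Mxi.PosDef)
    (U : Matrix (Fin n) (Fin r) ℝ) (hU : Uᵀ * Mx * U = 1)
    (Y : Matrix (Fin s) (Fin r) ℝ) (hY : Yᵀ * Mxi * Y = 1)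
    (Sig : Matrix (Fin r) (Fin r) ℝ) (hSig : IsUnit Sig.det)
    (F : Matrix (Fin n) (Fin s) ℝ)
    (Udot : Matrix (Fin n) (Fin r) ℝ)
    (hUdot : Udot = ((1 : Matrix (Fin n) (Fin n) ℝ) - U * Uᵀ * Mx) * F * Mxi * Y * Sig⁻¹)
    (Sigdot : Matrix (Fin r) (Fin r) ℝ)
    (hSigdot : Sigdot = Uᵀ * Mx * F * Mxi * Y)
    (Ydot : Matrix (Fin s) (Fin r) ℝ)
    (hYdot : Ydot = ((1 : Matrix (Fin s) (Fin s) ℝ) - Y * Yᵀ * Mxi) * Fᵀ * Mx * U * (Sig⁻¹)ᵀ) :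
    Udot * Sig * Yᵀ + U * Sigdot * Yᵀ + U * Sig * Ydotᵀ - F
      = -(((1 : Matrix (Fin n) (Fin n) ℝ) - U * Uᵀ * Mx) * F *
          ((1 : Matrix (Fin s) (Fin s) ℝ) - Mxi * Y * Yᵀ)) := by
  have hinv : Sig⁻¹ * Sig = 1 := nonsing_inv_mul Sig hSig
  have hinv2 : Sig * Sig⁻¹ = 1 := mul_nonsing_inv Sig hSig
  have hMxT : Mxᵀ = Mx := by
    have := hMx.1.eq; rwa [conjTranspose_eq_transpose_of_trivial] at this
  have hMxiT : Mxiᵀ = Mxi := by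
    have := hMxi.1.eq; rwa [conjTranspose_eq_transpose_of_trivial] at this
  subst hUdot hSigdot hYdot
  have h1 : ((1 : Matrix (Fin n) (Fin n) ℝ) - U * Uᵀ * Mx) * F * Mxi * Y * Sig⁻¹ * Sig * Yᵀ
      = ((1 : Matrix (Fin n) (Fin n) ℝ) - U * Uᵀ * Mx) * F * Mxi * Y * Yᵀ := by
    rw [Matrix.mul_assoc (((1 : Matrix (Fin n) (Fin n) ℝ) - U * Uᵀ * Mx) * F * Mxi * Y) Sig⁻¹ Sig,
      hinv, Matrix.mul_one]
  have h3 : U * Sig * (((1 : Matrix (Fin s) (Fin s) ℝ) - Y * Yᵀ * Mxi) * Fᵀ * Mx * U * (Sig⁻¹)ᵀ)ᵀ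
      = U * Uᵀ * Mx * F * ((1 : Matrix (Fin s) (Fin s) ℝ) - Mxi * Y * Yᵀ) := by
    have ht : (((1 : Matrix (Fin s) (Fin s) ℝ) - Y * Yᵀ * Mxi) * Fᵀ * Mx * U * (Sig⁻¹)ᵀ)ᵀ
        = Sig⁻¹ * (Uᵀ * Mx * F * ((1 : Matrix (Fin s) (Fin s) ℝ) - Mxi * Y * Yᵀ)) := by
      simp only [transpose_mul, transpose_sub, transpose_one, transpose_transpose, hMxT, hMxiT]
      simp only [Matrix.sub_mul, Matrix.mul_sub, Matrix.mul_one, Matrix.one_mul,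
        Matrix.mul_assoc]
    rw [ht, Matrix.mul_assoc U Sig _, ← Matrix.mul_assoc Sig Sig⁻¹ _, hinv2, Matrix.one_mul]
    simp only [Matrix.mul_assoc]
  rw [h1, h3]
  simp only [Matrix.sub_mul, Matrix.mul_sub, Matrix.mul_one, Matrix.one_mul, Matrix.mul_assoc,
    neg_sub]
  abel
end

section
/- Let A ∈ R^{n×s} and let M_x, M_ξ be symmetric positive definite. Among all matrices of the form U Σ Yᵀ with U ∈ R^{n×r} M_x-orthonormal, Y ∈ R^{s×r} M_ξ-orthonormal, and Σ ∈ R^{r×r}, the minimum of the weighted Frobenius error ‖A - U Σ Yᵀ‖²_{M_x,M_ξ} equals the sum of squares of the singular values of L_xᵀ A L_ξ beyond the r-th, where M_x = L_x L_xᵀ and M_ξ = L_ξ L_ξᵀ are Cholesky factorizations (the weighted Eckart–Young theorem underlying the optimality of the KL decomposition). -/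
/-!
Write `B = L_xᵀ A L_ξ`. The substitution `U ↦ L_xᵀ U`, `Y ↦ L_ξᵀ Y` is a bijection from
`M_x`- and `M_ξ`-orthonormal frames onto orthonormal ones, and it turns the weighted error into
the plain Frobenius error `‖B - U Σ Yᵀ‖²`. For orthonormal `U`, `Y` this error equals
`‖B‖² - ‖UᵀBY‖² + ‖Σ - UᵀBY‖²`, and `‖UᵀBY‖² ≤ ‖BY‖² = tr (Yᵀ BᵀB Y)`. Expanding `Y` in an
orthonormal eigenbasis `V` of `BᵀB`, the trace is `∑ⱼ σⱼ² cⱼ` where the weights `cⱼ` form the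
diagonal of the projection `VᵀY YᵀV`: they lie in `[0, 1]` and sum to `r`, so the trace is at
most `σ₁² + ⋯ + σᵣ²` (Ky Fan). All three inequalities are equalities for `Y` spanned by the top
`r` eigenvectors, `U` an orthonormal frame whose span contains the columns of `BY`, and
`Σ = UᵀBY`.
-/

open Matrix Finset

namespace Matrix

variable {m k l : Type*} [Fintype m] [Fintype k]

lemma transpose_mul_self_apply_self_nonneg (M : Matrix m l ℝ) (j : l) : 0 ≤ (Mᵀ * M) j j :=
  sum_nonneg fun i _ => mul_self_nonneg (M i j)

lemma trace_transpose_mul_self_nonneg (M : Matrix m k ℝ) : 0 ≤ trace (Mᵀ * M) :=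
  sum_nonneg fun j _ => transpose_mul_self_apply_self_nonneg M j

lemma trace_transpose_mul_comm (A B : Matrix m k ℝ) : trace (Aᵀ * B) = trace (Bᵀ * A) := by
  rw [← trace_transpose, transpose_mul, transpose_transpose]

lemma gram_sub_gram_compress [DecidableEq m] [DecidableEq k] {U : Matrix m k ℝ}
    (hU : Uᵀ * U = 1) (C : Matrix m l ℝ) :
    Cᵀ * C - (Uᵀ * C)ᵀ * (Uᵀ * C) = ((1 - U * Uᵀ) * C)ᵀ * ((1 - U * Uᵀ) * C) := by
  have hP : (1 - U * Uᵀ)ᵀ * (1 - U * Uᵀ) = 1 - U * Uᵀ := by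
    have : U * Uᵀ * (U * Uᵀ) = U * Uᵀ := by
      rw [Matrix.mul_assoc, ← Matrix.mul_assoc Uᵀ, hU, Matrix.one_mul]
    simp [Matrix.sub_mul, Matrix.mul_sub, this]
  calc Cᵀ * C - (Uᵀ * C)ᵀ * (Uᵀ * C) = Cᵀ * (1 - U * Uᵀ) * C := by
        simp [Matrix.mul_sub, Matrix.sub_mul, Matrix.mul_assoc]
    _ = Cᵀ * ((1 - U * Uᵀ)ᵀ * (1 - U * Uᵀ)) * C := by rw [hP]
    _ = ((1 - U * Uᵀ) * C)ᵀ * ((1 - U * Uᵀ) * C) := by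
        simp only [transpose_mul, Matrix.mul_assoc]

lemma diag_compress_le [DecidableEq m] [DecidableEq k] {U : Matrix m k ℝ} (hU : Uᵀ * U = 1)
    (C : Matrix m l ℝ) (j : l) :
    ((Uᵀ * C)ᵀ * (Uᵀ * C)) j j ≤ (Cᵀ * C) j j := by
  have h := transpose_mul_self_apply_self_nonneg ((1 - U * Uᵀ) * C) j
  rw [← gram_sub_gram_compress hU, sub_apply] at h
  linarith

lemma trace_compress_le [Fintype l] [DecidableEq m] [DecidableEq k] {U : Matrix m k ℝ}
    (hU : Uᵀ * U = 1) (C : Matrix m l ℝ) :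
    trace ((Uᵀ * C)ᵀ * (Uᵀ * C)) ≤ trace (Cᵀ * C) :=
  sum_le_sum fun j _ => diag_compress_le hU C j

lemma trace_gram_sub_mul_mul_transpose [Fintype l] [DecidableEq k] (B : Matrix m l ℝ)
    {U : Matrix m k ℝ} {Y : Matrix l k ℝ} (hU : Uᵀ * U = 1) (hY : Yᵀ * Y = 1)
    (S : Matrix k k ℝ) :
    trace ((B - U * S * Yᵀ)ᵀ * (B - U * S * Yᵀ)) =
      trace (Bᵀ * B) - trace ((Uᵀ * B * Y)ᵀ * (Uᵀ * B * Y))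
        + trace ((S - Uᵀ * B * Y)ᵀ * (S - Uᵀ * B * Y)) := by
  have hcross : trace (Bᵀ * (U * S * Yᵀ)) = trace ((Uᵀ * B * Y)ᵀ * S) := by
    rw [← Matrix.mul_assoc, trace_mul_comm]
    simp only [transpose_mul, transpose_transpose, Matrix.mul_assoc]
  have hnorm : trace ((U * S * Yᵀ)ᵀ * (U * S * Yᵀ)) = trace (Sᵀ * S) := by
    have : (U * S * Yᵀ)ᵀ * (U * S * Yᵀ) = Y * (Sᵀ * S * Yᵀ) := by
      simp only [transpose_mul, transpose_transpose, Matrix.mul_assoc]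
      rw [← Matrix.mul_assoc Uᵀ, hU, Matrix.one_mul]
    rw [this, trace_mul_comm, Matrix.mul_assoc, hY, Matrix.mul_one]
  simp only [transpose_sub, Matrix.sub_mul, Matrix.mul_sub, trace_sub]
  rw [trace_transpose_mul_comm (U * S * Yᵀ) B, trace_transpose_mul_comm S (Uᵀ * B * Y), hcross,
    hnorm]
  ring

lemma IsHermitian.exists_orthogonal_diagonalize [DecidableEq m] {H : Matrix m m ℝ}
    (hH : H.IsHermitian) :
    ∃ V : Matrix m m ℝ, Vᵀ * V = 1 ∧ V * Vᵀ = 1 ∧ Vᵀ * H * V = diagonal hH.eigenvalues := by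
  have hV := hH.eigenvectorUnitary.2
  have hstar : star (hH.eigenvectorUnitary : Matrix m m ℝ) =
      (hH.eigenvectorUnitary : Matrix m m ℝ)ᵀ :=
    conjTranspose_eq_transpose_of_trivial _
  refine ⟨hH.eigenvectorUnitary, ?_, ?_, ?_⟩
  · rw [← hstar, (mem_unitaryGroup_iff').mp hV]
  · rw [← hstar, (mem_unitaryGroup_iff).mp hV]
  · simpa [Unitary.conjStarAlgAut_star_apply, Unitary.coe_star, star_eq_conjTranspose] using
      hH.conjStarAlgAut_star_eigenvectorUnitary

lemma transpose_submatrix_mul_mul_submatrix {ι : Type*} (V A : Matrix m m ℝ) (g : ι → m) :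
    (V.submatrix id g)ᵀ * A * V.submatrix id g = (Vᵀ * A * V).submatrix g g := by
  rw [submatrix_mul _ _ g id g Function.bijective_id,
    submatrix_mul _ _ g id id Function.bijective_id, submatrix_id_id, transpose_submatrix]

lemma transpose_submatrix_mul_submatrix_eq_one [DecidableEq m] {ι : Type*} [DecidableEq ι]
    {V : Matrix m m ℝ} (hV : Vᵀ * V = 1) {g : ι → m} (hg : Function.Injective g) :
    (V.submatrix id g)ᵀ * V.submatrix id g = 1 := by
  simpa [hV, submatrix_one _ hg] using transpose_submatrix_mul_mul_submatrix V 1 g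

lemma trace_diagonal_mul_eq_sum [DecidableEq m] (d : m → ℝ) (A : Matrix m m ℝ) :
    trace (diagonal d * A) = ∑ i, d i * A i i := by
  simp [trace, diagonal_mul]

lemma trace_transpose_mul_mul_eq_sum_of_diagonalize [DecidableEq m] {H V : Matrix m m ℝ}
    {μ : m → ℝ} (hVV : V * Vᵀ = 1) (hHV : Vᵀ * H * V = diagonal μ) (Y : Matrix m k ℝ) :
    trace (Yᵀ * H * Y) = ∑ j, μ j * ((Yᵀ * V)ᵀ * (Yᵀ * V)) j j := by
  have hH : H = V * diagonal μ * Vᵀ := by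
    rw [← hHV]
    simp only [← Matrix.mul_assoc, hVV, Matrix.one_mul]
    simp only [Matrix.mul_assoc, hVV, Matrix.mul_one]
  calc trace (Yᵀ * H * Y) = trace ((Yᵀ * V) * (diagonal μ * (Vᵀ * Y))) := by
        rw [hH]; simp only [Matrix.mul_assoc]
    _ = trace (diagonal μ * ((Yᵀ * V)ᵀ * (Yᵀ * V))) := by
        rw [trace_mul_comm, Matrix.mul_assoc, transpose_mul, transpose_transpose]
    _ = _ := trace_diagonal_mul_eq_sum _ _

/-- `Q` is made of eigenvectors of `C Cᵀ`, among them all those with a nonzero eigenvalue. -/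
lemma exists_orthonormal_mul_transpose_mul_eq [Fintype l] [DecidableEq m] {r : ℕ}
    (C : Matrix m l ℝ) (hC : C.rank ≤ r) (hr : r ≤ Fintype.card m) :
    ∃ Q : Matrix m (Fin r) ℝ, Qᵀ * Q = 1 ∧ Q * (Qᵀ * C) = C := by
  have hH : (C * Cᵀ).IsHermitian := by
    simpa [conjTranspose_eq_transpose_of_trivial] using isHermitian_mul_conjTranspose_self C
  obtain ⟨V, hVV, hVV', hD⟩ := hH.exists_orthogonal_diagonalize
  have hrow : ∀ i, hH.eigenvalues i = 0 → (Vᵀ * C) i = 0 := by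
    intro i hi
    have h := congrFun (congrFun (show (Vᵀ * C) * (Vᵀ * C)ᵀ = diagonal hH.eigenvalues by
      rw [← hD]; simp only [transpose_mul, transpose_transpose, Matrix.mul_assoc]) i) i
    rw [diagonal_apply_eq, hi, mul_apply'] at h
    exact dotProduct_self_eq_zero.mp h
  have hsupp : #{i | hH.eigenvalues i ≠ 0} ≤ r := by
    rwa [← Fintype.card_subtype, ← hH.rank_eq_card_non_zero_eigs, rank_self_mul_transpose]
  obtain ⟨T, hT, hTr⟩ := exists_superset_card_eq hsupp (by simpa using hr)
  set h : Fin r ≃ T := (T.equivFinOfCardEq hTr).symm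
  have hg : Function.Injective fun j => (h j : m) := Subtype.val_injective.comp h.injective
  refine ⟨V.submatrix id fun j => (h j : m), transpose_submatrix_mul_submatrix_eq_one hVV hg, ?_⟩
  ext a b
  calc (V.submatrix id (fun j => (h j : m)) * ((V.submatrix id fun j => (h j : m))ᵀ * C)) a b
      = ∑ j, V a (h j) * (Vᵀ * C) (h j) b := by simp [mul_apply]
    _ = ∑ i ∈ T, V a i * (Vᵀ * C) i b := by
        rw [h.sum_comp (fun i : T => V a i * (Vᵀ * C) i b)]
        exact sum_coe_sort T fun i => V a i * (Vᵀ * C) i b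
    _ = ∑ i, V a i * (Vᵀ * C) i b := by
        refine sum_subset (subset_univ T) fun i _ hi => ?_
        rw [hrow i (by_contra fun hne => hi (hT (by simpa using hne)))]
        simp
    _ = C a b := by rw [← mul_apply, ← Matrix.mul_assoc, hVV', Matrix.one_mul]

lemma transpose_mul_mul_transpose_mul {ι : Type*} (L : Matrix m m ℝ) (U : Matrix m ι ℝ) :
    Uᵀ * (L * Lᵀ) * U = (Lᵀ * U)ᵀ * (Lᵀ * U) := by
  simp only [transpose_mul, transpose_transpose, Matrix.mul_assoc]

lemma isUnit_det_of_posDef_mul_transpose [DecidableEq m] {L : Matrix m m ℝ}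
    (hL : (L * Lᵀ).PosDef) : IsUnit L.det := by
  have h := hL.det_pos
  rw [det_mul, det_transpose] at h
  exact isUnit_iff_ne_zero.mpr fun h0 => by simp [h0] at h

end Matrix

lemma sum_mul_le_sum_filter_lt {s r : ℕ} (hr : r < s) {ev c : Fin s → ℝ} (hev : Antitone ev)
    (hc0 : ∀ i, 0 ≤ c i) (hc1 : ∀ i, c i ≤ 1) (hc : ∑ i, c i = r) :
    ∑ i, ev i * c i ≤ ∑ i ∈ univ.filter (fun i : Fin s => (i : ℕ) < r), ev i := by
  set p := ev ⟨r, hr⟩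
  have hterm : ∀ i : Fin s, ev i * c i - (if (i : ℕ) < r then ev i else 0) ≤
      p * c i - (if (i : ℕ) < r then p else 0) := by
    intro i
    by_cases hi : (i : ℕ) < r
    · have : p ≤ ev i := hev (Fin.mk_le_of_le_val hi.le)
      simp only [hi, if_true]
      nlinarith [hc1 i]
    · have : ev i ≤ p := hev (Fin.le_def.mpr (not_lt.mp hi))
      simp only [hi, if_false]
      nlinarith [hc0 i]
  have hcard : (#{i : Fin s | (i : ℕ) < r} : ℝ) = r := by
    rw [Fin.card_filter_val_lt, min_eq_right hr.le]
  have := sum_le_sum fun i (_ : i ∈ univ) => hterm i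
  rw [sum_sub_distrib, sum_sub_distrib, ← sum_filter, ← sum_filter, sum_const, nsmul_eq_mul,
    ← mul_sum, hc, hcard] at this
  linarith

lemma sum_castLE_eq_sum_filter_lt {s r : ℕ} (hr : r ≤ s) (f : Fin s → ℝ) :
    ∑ i : Fin r, f (Fin.castLE hr i) = ∑ i ∈ univ.filter (fun i : Fin s => (i : ℕ) < r), f i := by
  have : univ.filter (fun i : Fin s => (i : ℕ) < r) = univ.map (Fin.castLEEmb hr) := by
    ext i
    simp only [mem_filter, mem_univ, true_and, mem_map, Fin.castLEEmb_apply]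
    exact ⟨fun hi => ⟨⟨i, hi⟩, rfl⟩, by rintro ⟨j, rfl⟩; exact j.2⟩
  rw [this, sum_map]
  rfl

lemma trace_transpose_mul_mul_le_sum_filter_lt {s r : ℕ} (hr : r < s)
    {H : Matrix (Fin s) (Fin s) ℝ} (hH : H.IsHermitian) {ev : Fin s → ℝ} (hev : Antitone ev)
    (e : Fin s ≃ Fin s) (he : ∀ i, ev i = hH.eigenvalues (e i))
    {Y : Matrix (Fin s) (Fin r) ℝ} (hY : Yᵀ * Y = 1) :
    trace (Yᵀ * H * Y) ≤ ∑ i ∈ univ.filter (fun i : Fin s => (i : ℕ) < r), ev i := by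
  obtain ⟨V, hVV, hVV', hHV⟩ := hH.exists_orthogonal_diagonalize
  set c : Fin s → ℝ := fun j => ((Yᵀ * V)ᵀ * (Yᵀ * V)) j j
  have hc1 : ∀ j, c j ≤ 1 := fun j =>
    (diag_compress_le hY V j).trans_eq (by rw [hVV, one_apply_eq])
  have hc : ∑ j, c j = r := by
    change trace _ = _
    rw [trace_mul_comm, transpose_mul, transpose_transpose, Matrix.mul_assoc,
      ← Matrix.mul_assoc V, hVV', Matrix.one_mul, hY, trace_one, Fintype.card_fin]
  rw [trace_transpose_mul_mul_eq_sum_of_diagonalize hVV' hHV, ← e.sum_comp]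
  simp_rw [← he]
  exact sum_mul_le_sum_filter_lt hr hev (fun i => transpose_mul_self_apply_self_nonneg _ _)
    (fun i => hc1 _) (by rw [e.sum_comp c, hc])

lemma exists_trace_transpose_mul_mul_eq_sum_filter_lt {s r : ℕ} (hr : r ≤ s)
    {H : Matrix (Fin s) (Fin s) ℝ} (hH : H.IsHermitian) {ev : Fin s → ℝ}
    (e : Fin s ≃ Fin s) (he : ∀ i, ev i = hH.eigenvalues (e i)) :
    ∃ Y : Matrix (Fin s) (Fin r) ℝ, Yᵀ * Y = 1 ∧
      trace (Yᵀ * H * Y) = ∑ i ∈ univ.filter (fun i : Fin s => (i : ℕ) < r), ev i := by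
  obtain ⟨V, hVV, -, hHV⟩ := hH.exists_orthogonal_diagonalize
  have hg : Function.Injective (e ∘ Fin.castLE hr) := e.injective.comp (Fin.castLE_injective hr)
  refine ⟨V.submatrix id (e ∘ Fin.castLE hr), transpose_submatrix_mul_submatrix_eq_one hVV hg, ?_⟩
  rw [transpose_submatrix_mul_mul_submatrix, hHV, submatrix_diagonal _ _ hg, trace_diagonal,
    ← sum_castLE_eq_sum_filter_lt hr]
  simp [he]

def lowRankErrors {m k : Type*} [Fintype m] [Fintype k] (B : Matrix m k ℝ) (ι : Type*)
    [Fintype ι] [DecidableEq ι] : Set ℝ :=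
  {err | ∃ (U : Matrix m ι ℝ) (S : Matrix ι ι ℝ) (Y : Matrix k ι ℝ),
    Uᵀ * U = 1 ∧ Yᵀ * Y = 1 ∧ err = trace ((B - U * S * Yᵀ)ᵀ * (B - U * S * Yᵀ))}

theorem isLeast_lowRankErrors {m : Type*} [Fintype m] [DecidableEq m] {s r : ℕ}
    (hrm : r ≤ Fintype.card m) (hrs : r < s) (B : Matrix m (Fin s) ℝ) {ev : Fin s → ℝ}
    (hev : Antitone ev) (e : Fin s ≃ Fin s)
    (he : ∀ i, ev i = (isHermitian_conjTranspose_mul_self B).eigenvalues (e i)) :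
    IsLeast (lowRankErrors B (Fin r))
      (∑ i ∈ univ.filter (fun i : Fin s => r ≤ (i : ℕ)), ev i) := by
  set hH := isHermitian_conjTranspose_mul_self B
  have hBY : ∀ Y : Matrix (Fin s) (Fin r) ℝ,
      trace ((B * Y)ᵀ * (B * Y)) = trace (Yᵀ * (Bᴴ * B) * Y) := fun Y => by
    simp only [conjTranspose_eq_transpose_of_trivial, transpose_mul, Matrix.mul_assoc]
  have htot : trace (Bᵀ * B) = ∑ i ∈ univ.filter (fun i : Fin s => (i : ℕ) < r), ev i
      + ∑ i ∈ univ.filter (fun i : Fin s => r ≤ (i : ℕ)), ev i := by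
    simp_rw [← not_lt]
    rw [sum_filter_add_sum_filter_not, ← conjTranspose_eq_transpose_of_trivial,
      hH.trace_eq_sum_eigenvalues, ← e.sum_comp]
    simp [he]
  constructor
  · obtain ⟨Y, hY, hYH⟩ := exists_trace_transpose_mul_mul_eq_sum_filter_lt hrs.le hH e he
    obtain ⟨Q, hQ, hQBY⟩ := exists_orthonormal_mul_transpose_mul_eq (B * Y)
      ((rank_le_card_width _).trans (Fintype.card_fin r).le) hrm
    have hQB : (Qᵀ * B * Y)ᵀ * (Qᵀ * B * Y) = (B * Y)ᵀ * (B * Y) := by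
      calc (Qᵀ * B * Y)ᵀ * (Qᵀ * B * Y) = (B * Y)ᵀ * (Q * (Qᵀ * (B * Y))) := by
            simp only [transpose_mul, transpose_transpose, Matrix.mul_assoc]
        _ = (B * Y)ᵀ * (B * Y) := by rw [hQBY]
    refine ⟨Q, Qᵀ * B * Y, Y, hQ, hY, ?_⟩
    rw [trace_gram_sub_mul_mul_transpose B hQ hY, sub_self, transpose_zero, Matrix.zero_mul,
      trace_zero, hQB, hBY, hYH, htot]
    ring
  · rintro _ ⟨U, S, Y, hU, hY, rfl⟩
    have hcomp := trace_compress_le hU (B * Y)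
    have hkyfan := trace_transpose_mul_mul_le_sum_filter_lt hrs hH hev e he hY
    have hS := trace_transpose_mul_self_nonneg (S - Uᵀ * B * Y)
    rw [← Matrix.mul_assoc Uᵀ, hBY] at hcomp
    rw [trace_gram_sub_mul_mul_transpose B hU hY]
    linarith

lemma weightedErrors_eq_lowRankErrors {m k ι : Type*} [Fintype m] [Fintype k] [Fintype ι]
    [DecidableEq m] [DecidableEq k] [DecidableEq ι] {Lx : Matrix m m ℝ} (hLx : IsUnit Lx.det)
    {Lxi : Matrix k k ℝ} (hLxi : IsUnit Lxi.det) (A : Matrix m k ℝ) :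
    {err : ℝ | ∃ (U : Matrix m ι ℝ) (S : Matrix ι ι ℝ) (Y : Matrix k ι ℝ),
      Uᵀ * (Lx * Lxᵀ) * U = 1 ∧ Yᵀ * (Lxi * Lxiᵀ) * Y = 1 ∧
      err = trace ((A - U * S * Yᵀ)ᵀ * (Lx * Lxᵀ) * (A - U * S * Yᵀ) * (Lxi * Lxiᵀ))} =
      lowRankErrors (Lxᵀ * A * Lxi) ι := by
  have hLxU : ∀ U : Matrix m ι ℝ, Lxᵀ * ((Lxᵀ)⁻¹ * U) = U := fun U =>
    mul_nonsing_inv_cancel_left _ U (by rwa [det_transpose])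
  have hLxiY : ∀ Y : Matrix k ι ℝ, Lxiᵀ * ((Lxiᵀ)⁻¹ * Y) = Y := fun Y =>
    mul_nonsing_inv_cancel_left _ Y (by rwa [det_transpose])
  have herr : ∀ (U : Matrix m ι ℝ) (S : Matrix ι ι ℝ) (Y : Matrix k ι ℝ),
      trace ((A - U * S * Yᵀ)ᵀ * (Lx * Lxᵀ) * (A - U * S * Yᵀ) * (Lxi * Lxiᵀ)) =
        trace ((Lxᵀ * A * Lxi - (Lxᵀ * U) * S * (Lxiᵀ * Y)ᵀ)ᵀ *
          (Lxᵀ * A * Lxi - (Lxᵀ * U) * S * (Lxiᵀ * Y)ᵀ)) := fun U S Y => by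
    have hD : Lxᵀ * A * Lxi - (Lxᵀ * U) * S * (Lxiᵀ * Y)ᵀ = Lxᵀ * (A - U * S * Yᵀ) * Lxi := by
      simp only [Matrix.mul_sub, Matrix.sub_mul, transpose_mul, transpose_transpose,
        Matrix.mul_assoc]
    rw [hD, ← Matrix.mul_assoc _ Lxi, trace_mul_comm]
    simp only [transpose_mul, transpose_transpose, Matrix.mul_assoc]
  ext err
  constructor
  · rintro ⟨U, S, Y, hU, hY, rfl⟩
    exact ⟨Lxᵀ * U, S, Lxiᵀ * Y, by rwa [← transpose_mul_mul_transpose_mul],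
      by rwa [← transpose_mul_mul_transpose_mul], herr U S Y⟩
  · rintro ⟨U, S, Y, hU, hY, rfl⟩
    refine ⟨(Lxᵀ)⁻¹ * U, S, (Lxiᵀ)⁻¹ * Y, ?_, ?_, ?_⟩
    · rwa [transpose_mul_mul_transpose_mul, hLxU]
    · rwa [transpose_mul_mul_transpose_mul, hLxiY]
    · rw [herr, hLxU, hLxiY]

/-- Weighted Eckart–Young theorem: among all rank-`r` representations `U Σ Yᵀ` with
`U` `M_x`-orthonormal and `Y` `M_ξ`-orthonormal, the minimum of the weighted Frobenius
error `‖A - U Σ Yᵀ‖² = trace((A - UΣYᵀ)ᵀ M_x (A - UΣYᵀ) M_ξ)` is attained and equals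
the sum of the squared singular values of `B = L_xᵀ A L_ξ` beyond the `r`-th, where
`M_x = L_x L_xᵀ`, `M_ξ = L_ξ L_ξᵀ` are Cholesky factorizations and the singular values
`σ` of `B` (the square roots of the eigenvalues of `Bᵀ B`, in decreasing order). -/
theorem stmt19 {n s r : ℕ} (hr : r < min n s)
    (Mx Lx : Matrix (Fin n) (Fin n) ℝ) (hMx : Mx.PosDef) (hLx : Mx = Lx * Lxᵀ)
    (Mxi Lxi : Matrix (Fin s) (Fin s) ℝ) (hMxi : Mxi.PosDef) (hLxi : Mxi = Lxi * Lxiᵀ)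
    (A : Matrix (Fin n) (Fin s) ℝ)
    (σ : Fin s → ℝ) (hσ_anti : Antitone σ)
    (hσ : ∃ e : Equiv (Fin s) (Fin s), ∀ i, σ i =
      Real.sqrt ((Matrix.isHermitian_conjTranspose_mul_self (Lxᵀ * A * Lxi)).eigenvalues (e i))) :
    IsLeast
      { err : ℝ | ∃ (U : Matrix (Fin n) (Fin r) ℝ) (Sig : Matrix (Fin r) (Fin r) ℝ)
          (Y : Matrix (Fin s) (Fin r) ℝ),
          Uᵀ * Mx * U = 1 ∧ Yᵀ * Mxi * Y = 1 ∧
          err = Matrix.trace ((A - U * Sig * Yᵀ)ᵀ * Mx * (A - U * Sig * Yᵀ) * Mxi) }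
      (∑ i ∈ Finset.univ.filter (fun i : Fin s => r ≤ (i : ℕ)), σ i ^ 2) := by
  obtain ⟨e, he⟩ := hσ
  obtain ⟨hrn, hrs⟩ := lt_min_iff.mp hr
  have hσ_nonneg : ∀ i, 0 ≤ σ i := fun i => (he i).symm ▸ Real.sqrt_nonneg _
  subst hLx hLxi
  rw [weightedErrors_eq_lowRankErrors (isUnit_det_of_posDef_mul_transpose hMx)
    (isUnit_det_of_posDef_mul_transpose hMxi)]
  refine isLeast_lowRankErrors (by simpa using hrn.le) hrs _
    (fun i j hij => pow_le_pow_left₀ (hσ_nonneg j) (hσ_anti hij) 2) e fun i => ?_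
  rw [he i, Real.sq_sqrt ((posSemidef_conjTranspose_mul_self _).eigenvalues_nonneg _)]
end
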